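/- arXiv:1611.05537 — 4 statements merged into one kernel-verified Lean document; each statement's English description precedes it below -/
import Mathlib

section
/- For all positive integers n and m, f(n+m) ≤ f(n) + f(m) + 2, where f(k) is the maximum duplication distance to the root over all binary sequences of length k. -/
/-- A tandem duplication: `x = a ++ b ++ c` becomes `y = a ++ b ++ b ++ c` with `b` nonempty. -/
def Dup (x y : List Bool) : Prop :=
  ∃ a b c : List Bool, b ≠ [] ∧ x = a ++ b ++ c ∧ y = a ++ (b ++ b) ++ c

/-- `DupSteps k x y` : `y` is obtained from `x` by exactly `k` tandem duplications. -/
def DupSteps : ℕ → List Bool → List Bool → Prop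
  | 0 => fun x y => x = y
  | k + 1 => fun x y => ∃ z, Dup x z ∧ DupSteps k z y

/-- A binary sequence is square-free if it contains no nonempty factor of the form `b ++ b`. -/
def SqFree (s : List Bool) : Prop :=
  ¬ ∃ a b c : List Bool, b ≠ [] ∧ s = a ++ (b ++ b) ++ c

/-- Duplication distance from `s` to its (square-free) root. -/
noncomputable def ddist (s : List Bool) : ℕ :=
  sInf {k | ∃ r : List Bool, SqFree r ∧ DupSteps k r s}

/-- `fmax n` : maximum duplication distance to the root over binary sequences of length `n`. -/
noncomputable def fmax (n : ℕ) : ℕ :=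
  sSup (ddist '' {s : List Bool | s.length = n})

lemma dupsteps_trans {k l x y z} (h1 : DupSteps k x y) (h2 : DupSteps l y z) :
    DupSteps (k + l) x z := by
  induction k generalizing x with
  | zero => simpa [DupSteps] using h1 ▸ h2
  | succ k ih =>
    obtain ⟨w, hw, hws⟩ := h1
    rw [Nat.add_right_comm]
    exact ⟨w, hw, ih hws⟩

lemma dup_append_left {u x y} (h : Dup x y) : Dup (u ++ x) (u ++ y) := by
  obtain ⟨a, b, c, hb, rfl, rfl⟩ := h
  exact ⟨u ++ a, b, c, hb, by simp, by simp⟩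

lemma dup_append_right {u x y} (h : Dup x y) : Dup (x ++ u) (y ++ u) := by
  obtain ⟨a, b, c, hb, rfl, rfl⟩ := h
  exact ⟨a, b, c ++ u, hb, by simp, by simp⟩

lemma dupsteps_append_left {k u x y} (h : DupSteps k x y) : DupSteps k (u ++ x) (u ++ y) := by
  induction k generalizing x with
  | zero => simp [DupSteps] at h ⊢; rw [h]
  | succ k ih => obtain ⟨z, hz, hs⟩ := h; exact ⟨u ++ z, dup_append_left hz, ih hs⟩

lemma dupsteps_append_right {k u x y} (h : DupSteps k x y) : DupSteps k (x ++ u) (y ++ u) := by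
  induction k generalizing x with
  | zero => simp [DupSteps] at h ⊢; rw [h]
  | succ k ih => obtain ⟨z, hz, hs⟩ := h; exact ⟨z ++ u, dup_append_right hz, ih hs⟩

lemma dupsteps_append {k l x y u v} (h1 : DupSteps k x y) (h2 : DupSteps l u v) :
    DupSteps (k + l) (x ++ u) (y ++ v) :=
  dupsteps_trans (dupsteps_append_right h1) (dupsteps_append_left h2)

lemma exists_root_aux : ∀ N (s : List Bool), s.length ≤ N →
    ∃ r k, SqFree r ∧ DupSteps k r s ∧ k ≤ s.length := by
  intro N
  induction N with
  | zero =>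
    intro s hs
    refine ⟨s, 0, ?_, rfl, by omega⟩
    rintro ⟨a, b, c, hb, rfl⟩
    simp at hs
    simp_all
  | succ N ih =>
    intro s hs
    by_cases h : SqFree s
    · exact ⟨s, 0, h, rfl, by omega⟩
    · rw [SqFree, not_not] at h
      obtain ⟨a, b, c, hb, rfl⟩ := h
      have hblen : 0 < b.length := List.length_pos_iff.mpr hb
      have hlt : (a ++ b ++ c).length ≤ N := by simp at hs ⊢; omega
      obtain ⟨r, k, hr, hsteps, hk⟩ := ih (a ++ b ++ c) hlt
      refine ⟨r, k + 1, hr, ?_, by simp at hk ⊢; omega⟩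
      have : DupSteps (k + 1) r (a ++ (b ++ b) ++ c) :=
        dupsteps_trans hsteps (⟨a ++ (b ++ b) ++ c, ⟨a, b, c, hb, by simp, rfl⟩, rfl⟩ :
          DupSteps 1 (a ++ b ++ c) (a ++ (b ++ b) ++ c))
      exact this

lemma exists_root (s : List Bool) :
    ∃ r k, SqFree r ∧ DupSteps k r s ∧ k ≤ s.length :=
  exists_root_aux s.length s le_rfl

lemma ddist_le {s : List Bool} {r k} (hr : SqFree r) (h : DupSteps k r s) : ddist s ≤ k :=
  Nat.sInf_le ⟨r, hr, h⟩

lemma ddist_spec (s : List Bool) : ∃ r, SqFree r ∧ DupSteps (ddist s) r s := by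
  obtain ⟨r, k, hr, hs, _⟩ := exists_root s
  have hne : {k | ∃ r, SqFree r ∧ DupSteps k r s}.Nonempty := ⟨k, r, hr, hs⟩
  exact Nat.sInf_mem hne

lemma ddist_le_length (s : List Bool) : ddist s ≤ s.length := by
  obtain ⟨r, k, hr, hs, hk⟩ := exists_root s
  exact le_trans (ddist_le hr hs) hk

lemma sqfree_of (s : List Bool)
    (h : ∀ i < s.length, ∀ l < s.length, 0 < l → i + (l + l) ≤ s.length →
      (s.drop i).take l ≠ (s.drop (i + l)).take l) : SqFree s := by
  rintro ⟨a, b, c, hb, rfl⟩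
  have hblen : 0 < b.length := List.length_pos_iff.mpr hb
  have hlen : (a ++ (b ++ b) ++ c).length = a.length + (b.length + b.length) + c.length := by
    simp; omega
  refine h a.length (by omega) b.length (by omega) hblen (by omega) ?_
  have h1 : (a ++ (b ++ b) ++ c).drop a.length = (b ++ b) ++ c := by
    rw [show a ++ (b ++ b) ++ c = a ++ ((b ++ b) ++ c) by simp, List.drop_left]
  have h2 : (a ++ (b ++ b) ++ c).drop (a.length + b.length) = b ++ c := by
    rw [show a ++ (b ++ b) ++ c = (a ++ b) ++ (b ++ c) by simp,
      List.drop_left' (by simp)]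
  rw [h1, h2, show (b ++ b) ++ c = b ++ (b ++ c) by simp, List.take_left, List.take_left]

lemma dupsteps_nil {k y} (h : DupSteps k [] y) : y = [] := by
  induction k with
  | zero => exact h.symm
  | succ k ih =>
    obtain ⟨z, ⟨a, b, c, hb, hx, _⟩, _⟩ := h
    exact absurd (List.append_eq_nil_iff.mp (List.append_eq_nil_iff.mp hx.symm).1).2 hb

lemma sqfree_classify {r : List Bool} (hr : SqFree r) (hne : r ≠ []) :
    r = [false] ∨ r = [true] ∨ r = [false, true] ∨ r = [true, false] ∨
    r = [false, true, false] ∨ r = [true, false, true] := by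
  have adj : ∀ a (x : Bool) c, r = a ++ ([x] ++ [x]) ++ c → False :=
    fun a x c h => hr ⟨a, [x], c, by simp, h⟩
  match r, hne with
  | [a], _ => cases a <;> simp
  | [a, b], _ =>
    have hab : a ≠ b := fun h => adj [] a [] (by simp [← h])
    cases a <;> cases b <;> simp_all
  | [a, b, c], _ =>
    have hab : a ≠ b := fun h => adj [] a [c] (by simp [← h])
    have hbc : b ≠ c := fun h => adj [a] b [] (by simp [← h])
    cases a <;> cases b <;> cases c <;> simp_all
  | a :: b :: c :: d :: t, _ =>
    exfalso
    have hab : a ≠ b := fun h => adj [] a (c :: d :: t) (by simp [← h])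
    have hbc : b ≠ c := fun h => adj [a] b (d :: t) (by simp [← h])
    have hcd : c ≠ d := fun h => adj [a, b] c t (by simp [← h])
    have hca : c = a := by cases a <;> cases b <;> cases c <;> simp_all
    have hdb : d = b := by cases b <;> cases c <;> cases d <;> simp_all
    exact hr ⟨[], [a, b], t, by simp, by simp [hca, hdb]⟩
lemma sq0 : SqFree [false] := sqfree_of _ (by decide)
lemma sq1 : SqFree [true] := sqfree_of _ (by decide)
lemma sq01 : SqFree [false, true] := sqfree_of _ (by decide)
lemma sq10 : SqFree [true, false] := sqfree_of _ (by decide)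
lemma sq010 : SqFree [false, true, false] := sqfree_of _ (by decide)
lemma sq101 : SqFree [true, false, true] := sqfree_of _ (by decide)

lemma root_concat {r1 r2 : List Bool}
    (h1 : r1 = [false] ∨ r1 = [true] ∨ r1 = [false, true] ∨ r1 = [true, false] ∨
      r1 = [false, true, false] ∨ r1 = [true, false, true])
    (h2 : r2 = [false] ∨ r2 = [true] ∨ r2 = [false, true] ∨ r2 = [true, false] ∨
      r2 = [false, true, false] ∨ r2 = [true, false, true]) :
    ∃ r k, SqFree r ∧ k ≤ 2 ∧ DupSteps k r (r1 ++ r2) := by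
  rcases h1 with rfl | rfl | rfl | rfl | rfl | rfl <;>
      rcases h2 with rfl | rfl | rfl | rfl | rfl | rfl
  · exact ⟨[false], 1, sq0, by norm_num, ⟨[false, false], ⟨[], [false], [], by decide, rfl, rfl⟩, rfl⟩⟩
  · exact ⟨[false, true], 0, sq01, by norm_num, rfl⟩
  · exact ⟨[false, true], 1, sq01, by norm_num, ⟨[false, false, true], ⟨[], [false], [true], by decide, rfl, rfl⟩, rfl⟩⟩
  · exact ⟨[false, true, false], 0, sq010, by norm_num, rfl⟩
  · exact ⟨[false, true, false], 1, sq010, by norm_num, ⟨[false, false, true, false], ⟨[], [false], [true, false], by decide, rfl, rfl⟩, rfl⟩⟩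
  · exact ⟨[false, true], 1, sq01, by norm_num, ⟨[false, true, false, true], ⟨[], [false, true], [], by decide, rfl, rfl⟩, rfl⟩⟩
  · exact ⟨[true, false], 0, sq10, by norm_num, rfl⟩
  · exact ⟨[true], 1, sq1, by norm_num, ⟨[true, true], ⟨[], [true], [], by decide, rfl, rfl⟩, rfl⟩⟩
  · exact ⟨[true, false, true], 0, sq101, by norm_num, rfl⟩
  · exact ⟨[true, false], 1, sq10, by norm_num, ⟨[true, true, false], ⟨[], [true], [false], by decide, rfl, rfl⟩, rfl⟩⟩
  · exact ⟨[true, false], 1, sq10, by norm_num, ⟨[true, false, true, false], ⟨[], [true, false], [], by decide, rfl, rfl⟩, rfl⟩⟩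
  · exact ⟨[true, false, true], 1, sq101, by norm_num, ⟨[true, true, false, true], ⟨[], [true], [false, true], by decide, rfl, rfl⟩, rfl⟩⟩
  · exact ⟨[false, true, false], 0, sq010, by norm_num, rfl⟩
  · exact ⟨[false, true], 1, sq01, by norm_num, ⟨[false, true, true], ⟨[false], [true], [], by decide, rfl, rfl⟩, rfl⟩⟩
  · exact ⟨[false, true], 1, sq01, by norm_num, ⟨[false, true, false, true], ⟨[], [false, true], [], by decide, rfl, rfl⟩, rfl⟩⟩
  · exact ⟨[false, true, false], 1, sq010, by norm_num, ⟨[false, true, true, false], ⟨[false], [true], [false], by decide, rfl, rfl⟩, rfl⟩⟩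
  · exact ⟨[false, true, false], 1, sq010, by norm_num, ⟨[false, true, false, true, false], ⟨[], [false, true], [false], by decide, rfl, rfl⟩, rfl⟩⟩
  · exact ⟨[false, true], 2, sq01, by norm_num, ⟨[false, true, false, true], ⟨[], [false, true], [], by decide, rfl, rfl⟩, [false, true, true, false, true], ⟨[false], [true], [false, true], by decide, rfl, rfl⟩, rfl⟩⟩
  · exact ⟨[true, false], 1, sq10, by norm_num, ⟨[true, false, false], ⟨[true], [false], [], by decide, rfl, rfl⟩, rfl⟩⟩
  · exact ⟨[true, false, true], 0, sq101, by norm_num, rfl⟩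
  · exact ⟨[true, false, true], 1, sq101, by norm_num, ⟨[true, false, false, true], ⟨[true], [false], [true], by decide, rfl, rfl⟩, rfl⟩⟩
  · exact ⟨[true, false], 1, sq10, by norm_num, ⟨[true, false, true, false], ⟨[], [true, false], [], by decide, rfl, rfl⟩, rfl⟩⟩
  · exact ⟨[true, false], 2, sq10, by norm_num, ⟨[true, false, true, false], ⟨[], [true, false], [], by decide, rfl, rfl⟩, [true, false, false, true, false], ⟨[true], [false], [true, false], by decide, rfl, rfl⟩, rfl⟩⟩
  · exact ⟨[true, false, true], 1, sq101, by norm_num, ⟨[true, false, true, false, true], ⟨[], [true, false], [true], by decide, rfl, rfl⟩, rfl⟩⟩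
  · exact ⟨[false, true, false], 1, sq010, by norm_num, ⟨[false, true, false, false], ⟨[false, true], [false], [], by decide, rfl, rfl⟩, rfl⟩⟩
  · exact ⟨[false, true], 1, sq01, by norm_num, ⟨[false, true, false, true], ⟨[], [false, true], [], by decide, rfl, rfl⟩, rfl⟩⟩
  · exact ⟨[false, true], 2, sq01, by norm_num, ⟨[false, true, false, true], ⟨[], [false, true], [], by decide, rfl, rfl⟩, [false, true, false, false, true], ⟨[false, true], [false], [true], by decide, rfl, rfl⟩, rfl⟩⟩
  · exact ⟨[false, true, false], 1, sq010, by norm_num, ⟨[false, true, false, true, false], ⟨[], [false, true], [false], by decide, rfl, rfl⟩, rfl⟩⟩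
  · exact ⟨[false, true, false], 1, sq010, by norm_num, ⟨[false, true, false, false, true, false], ⟨[], [false, true, false], [], by decide, rfl, rfl⟩, rfl⟩⟩
  · exact ⟨[false, true], 2, sq01, by norm_num, ⟨[false, true, false, true], ⟨[], [false, true], [], by decide, rfl, rfl⟩, [false, true, false, true, false, true], ⟨[], [false, true], [false, true], by decide, rfl, rfl⟩, rfl⟩⟩
  · exact ⟨[true, false], 1, sq10, by norm_num, ⟨[true, false, true, false], ⟨[], [true, false], [], by decide, rfl, rfl⟩, rfl⟩⟩
  · exact ⟨[true, false, true], 1, sq101, by norm_num, ⟨[true, false, true, true], ⟨[true, false], [true], [], by decide, rfl, rfl⟩, rfl⟩⟩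
  · exact ⟨[true, false, true], 1, sq101, by norm_num, ⟨[true, false, true, false, true], ⟨[], [true, false], [true], by decide, rfl, rfl⟩, rfl⟩⟩
  · exact ⟨[true, false], 2, sq10, by norm_num, ⟨[true, false, true, false], ⟨[], [true, false], [], by decide, rfl, rfl⟩, [true, false, true, true, false], ⟨[true, false], [true], [false], by decide, rfl, rfl⟩, rfl⟩⟩
  · exact ⟨[true, false], 2, sq10, by norm_num, ⟨[true, false, true, false], ⟨[], [true, false], [], by decide, rfl, rfl⟩, [true, false, true, false, true, false], ⟨[], [true, false], [true, false], by decide, rfl, rfl⟩, rfl⟩⟩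
  · exact ⟨[true, false, true], 1, sq101, by norm_num, ⟨[true, false, true, true, false, true], ⟨[], [true, false, true], [], by decide, rfl, rfl⟩, rfl⟩⟩

lemma fmax_bddAbove (n : ℕ) : BddAbove (ddist '' {s : List Bool | s.length = n}) := by
  refine ⟨n, ?_⟩
  rintro x ⟨s, hs, rfl⟩
  exact hs ▸ ddist_le_length s

lemma ddist_le_fmax {s : List Bool} {n : ℕ} (hs : s.length = n) : ddist s ≤ fmax n :=
  le_csSup (fmax_bddAbove n) ⟨s, hs, rfl⟩

theorem duplication_distance_subadditive (n m : ℕ) (hn : 0 < n) (hm : 0 < m) :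
    fmax (n + m) ≤ fmax n + fmax m + 2 := by
  have key : ∀ s : List Bool, s.length = n + m → ddist s ≤ fmax n + fmax m + 2 := by
    intro s hs
    set u := s.take n with hu'
    set v := s.drop n with hv'
    have hu : u.length = n := by simp [hu', hs]
    have hv : v.length = m := by simp [hv', hs]
    have huv : s = u ++ v := (List.take_append_drop n s).symm
    obtain ⟨ru, hru, hsu⟩ := ddist_spec u
    obtain ⟨rv, hrv, hsv⟩ := ddist_spec v
    have hrune : ru ≠ [] := by
      rintro rfl
      have := dupsteps_nil hsu
      rw [this] at hu; simp at hu; omega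
    have hrvne : rv ≠ [] := by
      rintro rfl
      have := dupsteps_nil hsv
      rw [this] at hv; simp at hv; omega
    obtain ⟨r, k, hr, hk2, hst⟩ :=
      root_concat (sqfree_classify hru hrune) (sqfree_classify hrv hrvne)
    have hsteps : DupSteps (k + (ddist u + ddist v)) r s := by
      rw [huv]
      exact dupsteps_trans hst (dupsteps_append hsu hsv)
    have h1 : ddist s ≤ k + (ddist u + ddist v) := ddist_le hr hsteps
    have h2 : ddist u ≤ fmax n := ddist_le_fmax hu
    have h3 : ddist v ≤ fmax m := ddist_le_fmax hv
    omega
  apply csSup_le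
  · exact ⟨ddist (List.replicate (n + m) false), ⟨_, by simp, rfl⟩⟩
  · rintro x ⟨s, hs, rfl⟩
    exact key s hs
end

section
/- For any deduplication process s = s^(0) → s^(1) → ⋯ → s^(f) = root(s) of length f of a binary sequence s, there is a normal deduplication process s = s^(0) → s'^(1) → ⋯ → s'^(f) = root(s) of the same length f with the same final sequence. -/
/-- An `(i,h)`-step: a deduplication removing one block of a repeat of length `h`
starting at position `i` (0-indexed). -/
def DedupStep (i h : ℕ) (x y : List Bool) : Prop :=
  ∃ a b c : List Bool, a.length = i ∧ b.length = h ∧ b ≠ [] ∧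
    x = a ++ (b ++ b) ++ c ∧ y = a ++ b ++ c

/-- A deduplication process described by its list of steps `(i_t, h_t)`. -/
def DedupProcess : List (ℕ × ℕ) → List Bool → List Bool → Prop
  | [] => fun x y => x = y
  | p :: rest => fun x y => ∃ z, DedupStep p.1 p.2 x z ∧ DedupProcess rest z y

/-- A process is normal if for any two consecutive steps `(i_t, h_t)`, `(i_{t+1}, h_{t+1})`,
whenever `i_{t+1} < i_t` one has `i_{t+1} + 2 h_{t+1} ≥ i_t`. -/
def NormalProcess (steps : List (ℕ × ℕ)) : Prop :=
  List.Chain' (fun p q : ℕ × ℕ => q.1 < p.1 → p.1 ≤ q.1 + 2 * q.2) steps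

lemma split_eq {l1 l2 l3 l4 : List Bool} (h : l1 ++ l2 = l3 ++ l4)
    (hl : l3.length ≤ l1.length) : ∃ m, l1 = l3 ++ m ∧ l4 = m ++ l2 := by
  refine ⟨l1.drop l3.length, ?_, ?_⟩
  · have h3 : l3 = l1.take l3.length := by
      have := congrArg (List.take l3.length) h
      rw [List.take_append_of_le_length hl, List.take_left] at this
      exact this.symm
    conv_lhs => rw [← List.take_append_drop l3.length l1]
    rw [← h3]
  · have := congrArg (List.drop l3.length) h
    rw [List.drop_append_of_le_length hl, List.drop_left] at this
    exact this.symm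

lemma swap_steps {i h i' h' : ℕ} {x y z : List Bool}
    (h1 : DedupStep i h x y) (h2 : DedupStep i' h' y z) (hlt : i' + 2 * h' < i) :
    ∃ w, DedupStep i' h' x w ∧ DedupStep (i - h') h w z ∧ 1 ≤ h' := by
  obtain ⟨a, b, c, ha, hb, hbne, hx, hy⟩ := h1
  obtain ⟨a', b', c', ha', hb', hbne', hy', hz⟩ := h2
  have hh' : 1 ≤ h' := hb' ▸ List.length_pos_iff.mpr hbne'
  have key : a ++ (b ++ c) = (a' ++ (b' ++ b')) ++ c' := by
    rw [← List.append_assoc, ← hy, hy', List.append_assoc]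
  have hlen : (a' ++ (b' ++ b')).length ≤ a.length := by
    simp [ha, ha', hb']; omega
  obtain ⟨d, hd1, hd2⟩ := split_eq key hlen
  have hdlen : a'.length + (b'.length + (b'.length + d.length)) = a.length := by
    have := congrArg List.length hd1; simpa using this.symm
  refine ⟨a' ++ b' ++ (d ++ ((b ++ b) ++ c)),
    ⟨a', b', d ++ ((b ++ b) ++ c), ha', hb', hbne', ?_, ?_⟩,
    ⟨a' ++ b' ++ d, b, c, ?_, hb, hbne, ?_, ?_⟩, hh'⟩
  · rw [hx, hd1]; simp
  · simp
  · simp only [List.length_append]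
    rw [ha', hb'] at *; omega
  · simp
  · rw [hz, hd2]; simp

lemma insert_step : ∀ (n : ℕ) (p : ℕ × ℕ) (steps : List (ℕ × ℕ)) (s z r : List Bool),
    p.1 ≤ n → DedupStep p.1 p.2 s z → DedupProcess steps z r → NormalProcess steps →
    ∃ steps' : List (ℕ × ℕ), steps'.length = steps.length + 1 ∧ NormalProcess steps' ∧
      DedupProcess steps' s r ∧ (steps'.head? = some p ∨ steps'.head? = steps.head?) := by
  intro n
  induction n with
  | zero =>
    intro p steps s z r hn hstep hproc hnorm
    cases steps with
    | nil => exact ⟨[p], rfl, List.isChain_singleton p, ⟨z, hstep, hproc⟩, Or.inl rfl⟩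
    | cons q t =>
      obtain ⟨w, hq, ht⟩ := hproc
      refine ⟨p :: q :: t, rfl, ?_, ⟨z, hstep, w, hq, ht⟩, Or.inl rfl⟩
      exact List.isChain_cons_cons.mpr ⟨fun hlt => by omega, hnorm⟩
  | succ n ih =>
    intro p steps s z r hn hstep hproc hnorm
    cases steps with
    | nil => exact ⟨[p], rfl, List.isChain_singleton p, ⟨z, hstep, hproc⟩, Or.inl rfl⟩
    | cons q t =>
      obtain ⟨w, hq, ht⟩ := hproc
      by_cases hcase : q.1 + 2 * q.2 < p.1
      · obtain ⟨w', hw1, hw2, hh⟩ := swap_steps hstep hq hcase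
        have hnorm' : NormalProcess t := (List.isChain_cons.mp hnorm).2
        obtain ⟨t', hlen, hn', hp', hhead⟩ :=
          ih (p.1 - q.2, p.2) t w' w r (by omega) hw2 ht hnorm'
        refine ⟨q :: t', by simp [hlen], ?_, ⟨w', hw1, hp'⟩, Or.inr rfl⟩
        cases t' with
        | nil => exact List.isChain_singleton q
        | cons a t'' =>
          refine List.isChain_cons_cons.mpr ⟨?_, hn'⟩
          rcases hhead with h1 | h2
          · simp only [List.head?_cons, Option.some.injEq] at h1
            subst h1
            intro hlt; omega
          · cases t with
            | nil => simp at h2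
            | cons b t2 =>
              simp only [List.head?_cons, Option.some.injEq] at h2
              subst h2
              exact (List.isChain_cons_cons.mp hnorm).1
      · refine ⟨p :: q :: t, rfl, ?_, ⟨z, hstep, w, hq, ht⟩, Or.inl rfl⟩
        exact List.isChain_cons_cons.mpr ⟨fun hlt => by omega, hnorm⟩

theorem exists_normal_process (s r : List Bool) (steps : List (ℕ × ℕ))
    (hproc : DedupProcess steps s r) (hroot : SqFree r) :
    ∃ steps' : List (ℕ × ℕ), steps'.length = steps.length ∧
      NormalProcess steps' ∧ DedupProcess steps' s r := by
  induction steps generalizing s with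
  | nil => exact ⟨[], rfl, List.isChain_nil, hproc⟩
  | cons p rest ih =>
    obtain ⟨z, hstep, hrest⟩ := hproc
    obtain ⟨rest', hlen, hnorm, hproc'⟩ := ih z hrest
    obtain ⟨steps', hl, hn, hp, _⟩ := insert_step p.1 p rest' s z r le_rfl hstep hproc' hnorm
    exact ⟨steps', by simp [hl, hlen], hn, hp⟩
end

section
/- For any binary sequence s and any integer k ≥ 4, f(s) ≥ K(s)/(k−1), where K(s) is the number of distinct substrings of length k (k-mers) occurring in s. -/
/-!
A duplication `a b c ↦ a b b c` creates only those `k`-mers that straddle the junction between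
the two copies of `b`: every other `k`-mer of `a b b c` lies inside `a b` or `b c`, both factors
of `a b c`. A straddling `k`-mer starts at one of the `k - 1` positions before the junction, so
each duplication adds at most `k - 1` new `k`-mers. The root is square-free, hence has length at
most `3 < k` and no `k`-mers at all, so `K(s) ≤ (k - 1) f(s)`.
-/

namespace List

variable {α : Type*}

def kFactors (k : ℕ) (x : List α) : Set (List α) :=
  {w | w.length = k ∧ w <:+: x}

variable {k : ℕ} {x y : List α}

theorem kFactors_finite (k : ℕ) (x : List α) : (kFactors k x).Finite :=
  x.sublists.finite_toSet.subset fun _ hw => mem_sublists.2 hw.2.sublist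

theorem kFactors_mono (h : x <:+: y) : kFactors k x ⊆ kFactors k y :=
  fun _ ⟨hw, hwx⟩ => ⟨hw, hwx.trans h⟩

theorem kFactors_eq_empty_of_length_lt (h : x.length < k) : kFactors k x = ∅ :=
  Set.eq_empty_of_forall_notMem fun _ ⟨hw, hwx⟩ => by have := hwx.length_le; omega

theorem take_drop_length_eq {w s t : List α} (hw : w.length = k) :
    ((s ++ w ++ t).drop s.length).take k = w := by
  rw [append_assoc, drop_left, take_left' hw]

theorem kFactors_append_subset (k : ℕ) (u v : List α) :
    kFactors k (u ++ v) ⊆ kFactors k u ∪ kFactors k v ∪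
      (fun i => ((u ++ v).drop i).take k) '' ↑(Finset.Ico (u.length - (k - 1)) u.length) := by
  rintro w ⟨hw, s, t, hst⟩
  by_cases hleft : s.length + k ≤ u.length
  · obtain ⟨t', ht'⟩ : s ++ w <+: u :=
      prefix_of_prefix_length_le ⟨t, hst⟩ (prefix_append u v) (by simp [hw, hleft])
    exact .inl (.inl ⟨hw, s, t', ht'⟩)
  by_cases hright : u.length ≤ s.length
  · obtain ⟨s', hs'⟩ : w ++ t <:+ v :=
      suffix_of_suffix_length_le ⟨s, by simpa using hst⟩ (suffix_append u v)
        (by have := congrArg length hst; simp only [length_append] at this ⊢; omega)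
    exact .inl (.inr ⟨hw, s', t, by simpa using hs'⟩)
  refine .inr ⟨s.length, Finset.mem_Ico.2 (by omega), ?_⟩
  exact hst ▸ take_drop_length_eq hw

theorem ncard_kFactors_append_le {u v : List α} (hu : u <:+: x) (hv : v <:+: x) :
    (kFactors k (u ++ v)).ncard ≤ (kFactors k x).ncard + (k - 1) := by
  set junction :=
    (fun i => ((u ++ v).drop i).take k) '' ↑(Finset.Ico (u.length - (k - 1)) u.length)
  have hsub : kFactors k (u ++ v) ⊆ kFactors k x ∪ junction := by
    refine (kFactors_append_subset k u v).trans (Set.union_subset_union_left _ ?_)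
    exact Set.union_subset (kFactors_mono hu) (kFactors_mono hv)
  calc (kFactors k (u ++ v)).ncard
      ≤ (kFactors k x ∪ junction).ncard :=
        Set.ncard_le_ncard hsub ((kFactors_finite k x).union ((Finset.finite_toSet _).image _))
    _ ≤ (kFactors k x).ncard + junction.ncard := Set.ncard_union_le _ _
    _ ≤ (kFactors k x).ncard + (k - 1) := by
        grw [Set.ncard_image_le (Finset.finite_toSet _), Set.ncard_coe_finset, Nat.card_Ico]
        omega

end List

open List

theorem Dup.ncard_kFactors_le {x y : List Bool} (h : Dup x y) (k : ℕ) :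
    (kFactors k y).ncard ≤ (kFactors k x).ncard + (k - 1) := by
  obtain ⟨a, b, c, -, rfl, rfl⟩ := h
  have hab : a ++ b <:+: a ++ b ++ c := (prefix_append _ _).isInfix
  have hbc : b ++ c <:+: a ++ b ++ c := by
    rw [append_assoc]; exact (suffix_append _ _).isInfix
  simpa using ncard_kFactors_append_le (k := k) hab hbc

theorem DupSteps.ncard_kFactors_le (k : ℕ) :
    ∀ {m : ℕ} {r s : List Bool}, DupSteps m r s →
      (kFactors k s).ncard ≤ (kFactors k r).ncard + m * (k - 1)
  | 0, _, _, rfl => by simp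
  | m + 1, _, _, ⟨_, hdup, hsteps⟩ => by
    have := hdup.ncard_kFactors_le k
    have := hsteps.ncard_kFactors_le k
    rw [add_one_mul]; omega

theorem DupSteps.snoc : ∀ {m : ℕ} {r x y : List Bool},
    DupSteps m r x → Dup x y → DupSteps (m + 1) r y
  | 0, _, _, y, rfl, hd => ⟨y, hd, rfl⟩
  | _ + 1, _, _, _, ⟨z, hz, hsteps⟩, hd => ⟨z, hz, hsteps.snoc hd⟩

theorem exists_sqFree_dupSteps (s : List Bool) : ∃ m r, SqFree r ∧ DupSteps m r s := by
  by_cases h : SqFree s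
  · exact ⟨0, s, h, rfl⟩
  obtain ⟨a, b, c, hb, hs⟩ := not_not.mp h
  obtain ⟨m, r, hr, hrs⟩ := exists_sqFree_dupSteps (a ++ b ++ c)
  exact ⟨m + 1, r, hr, hrs.snoc ⟨a, b, c, hb, rfl, hs⟩⟩
termination_by s.length
decreasing_by subst hs; have := length_pos_iff.mpr hb; simp only [length_append]; omega

theorem SqFree.length_le_three {r : List Bool} (h : SqFree r) : r.length ≤ 3 := by
  match r, h with
  | [], _ | [_], _ | [_, _], _ | [_, _, _], _ => simp
  | x₀ :: x₁ :: x₂ :: x₃ :: rest, h =>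
    -- every binary word of length 4 already contains a square
    refine absurd ?_ h
    cases x₀ <;> cases x₁ <;> cases x₂ <;> cases x₃ <;>
    first
    | exact ⟨[], [false], _, by simp, rfl⟩
    | exact ⟨[], [true], _, by simp, rfl⟩
    | exact ⟨[false], [true], _, by simp, rfl⟩
    | exact ⟨[true], [false], _, by simp, rfl⟩
    | exact ⟨[false, true], [false], _, by simp, rfl⟩
    | exact ⟨[true, false], [true], _, by simp, rfl⟩
    | exact ⟨[], [false, true], _, by simp, rfl⟩
    | exact ⟨[], [true, false], _, by simp, rfl⟩

theorem kmer_lower_bound_general (s : List Bool) (k : ℕ) (hk : 4 ≤ k) :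
    (Set.ncard {w : List Bool | w.length = k ∧ w <:+: s} : ℝ) / ((k : ℝ) - 1) ≤ ddist s := by
  obtain ⟨r, hr, hrs⟩ : ∃ r, SqFree r ∧ DupSteps (ddist s) r s :=
    Nat.sInf_mem (exists_sqFree_dupSteps s)
  have hcount := hrs.ncard_kFactors_le k
  rw [kFactors_eq_empty_of_length_lt (x := r) (by have := hr.length_le_three; omega),
    Set.ncard_empty, zero_add] at hcount
  have hk1 : (0 : ℝ) < k - 1 := by
    have : (4 : ℝ) ≤ k := by exact_mod_cast hk
    linarith
  rw [div_le_iff₀ hk1]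
  calc (Set.ncard (kFactors k s) : ℝ) ≤ ((ddist s * (k - 1) : ℕ) : ℝ) := by exact_mod_cast hcount
    _ = ddist s * ((k : ℝ) - 1) := by push_cast [Nat.cast_sub (by omega : 1 ≤ k)]; ring

theorem kmer_lower_bound (s : List Bool) (hs : s ≠ []) (k : ℕ) (hk : 4 ≤ k) :
    (Set.ncard {w : List Bool | w.length = k ∧ w <:+: s} : ℝ) / ((k : ℝ) - 1) ≤ ddist s :=
  kmer_lower_bound_general s k hk
end

section
/- If β > 1/2, then for any integer k ≥ (2β+1)/(2β−1) and any n ≥ k², every binary sequence of length n contains a β-repeat of length ℓ·⌊n/k²⌋ for some ℓ ∈ {1, …, k}. -/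
/-- Hamming distance between two binary lists (of the same length). -/
def hdist (x y : List Bool) : ℕ := (List.zip x y).countP (fun p => p.1 != p.2)

/-- `s` contains a `β`-repeat of length `h`: two adjacent blocks, each of length `h`,
at Hamming distance at most `β·h`. -/
def HasBetaRepeat (β : ℝ) (h : ℕ) (s : List Bool) : Prop :=
  ∃ a b b' c : List Bool, b.length = h ∧ b'.length = h ∧
    (hdist b b' : ℝ) ≤ β * h ∧ s = a ++ (b ++ b') ++ c

/-!
Suppose there is no `β`-repeat of length `ℓm` for `1 ≤ ℓ ≤ k`, where `m = ⌊n/k²⌋`, and let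
`P = k(k-1)m`. For `i < j ≤ k`, the windows of length `P` starting at `im` and `jm` are covered
(from the left) by `⌊k(k-1)/(j-i)⌋ ≥ (k-1)²/(j-i)` pairs of adjacent blocks of length `(j-i)m`,
so they differ in more than `β(k-1)²m` positions. On the other hand, for each offset `t < P`
the `k+1` bits at `t + im`, `i ≤ k`, contain at most `(k+1)²/4` unequal pairs (the number of
unequal pairs is `#ones · #zeros`). Summing over the `k(k+1)/2` pairs `i < j` and the `P` offsets,
`k(k+1)/2 · β(k-1)²m < P(k+1)²/4`, i.e. `2β(k-1) < k+1`, contradicting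
`k ≥ (2β+1)/(2β-1)`.
-/

open Finset

def mismatchCount (f : ℕ → Bool) (a b len : ℕ) : ℕ :=
  ∑ t ∈ range len, if f (a + t) = f (b + t) then 0 else 1

lemma mismatchCount_add (f : ℕ → Bool) (a b L L' : ℕ) :
    mismatchCount f a b (L + L') =
      mismatchCount f a b L + mismatchCount f (a + L) (b + L) L' := by
  simp only [mismatchCount, sum_range_add, add_assoc]

lemma mismatchCount_mono (f : ℕ → Bool) (a b : ℕ) {L L' : ℕ} (h : L ≤ L') :
    mismatchCount f a b L ≤ mismatchCount f a b L' :=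
  sum_le_sum_of_subset (range_subset_range.mpr h)

def BetaRepeatFree (β : ℝ) (f : ℕ → Bool) (h len : ℕ) : Prop :=
  ∀ c, c + 2 * h ≤ len → β * h < mismatchCount f c (c + h) h

lemma hdist_eq_sum (x y : List Bool) (h : x.length = y.length) :
    hdist x y = ∑ t ∈ range x.length, if x.getD t false = y.getD t false then 0 else 1 := by
  induction x generalizing y with
  | nil => simp [hdist]
  | cons a x ih =>
    cases y with
    | nil => simp at h
    | cons b y =>
      have hcons : hdist (a :: x) (b :: y) = (if a = b then 0 else 1) + hdist x y := by
        simp only [hdist, List.zip_cons_cons, List.countP_cons]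
        cases a <;> cases b <;> simp [add_comm]
      rw [hcons, ih y (by simpa using h), List.length_cons, sum_range_succ']
      simp [add_comm]

lemma getD_take_drop (l : List Bool) {c h t : ℕ} (ht : t < h) (hl : c + h ≤ l.length) :
    ((l.drop c).take h).getD t false = l.getD (c + t) false := by
  rw [List.getD_eq_getElem _ _ (by simp; omega), List.getD_eq_getElem _ _ (by omega)]
  simp

lemma betaRepeatFree_of_not_hasBetaRepeat {β : ℝ} {h : ℕ} {s : List Bool}
    (hs : ¬ HasBetaRepeat β h s) : BetaRepeatFree β (fun t => s.getD t false) h s.length := by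
  intro c hc
  by_contra! hle
  set b := (s.drop c).take h
  set b' := (s.drop (c + h)).take h
  have hb : b.length = h := by simp [b]; omega
  have hb' : b'.length = h := by simp [b']; omega
  refine hs ⟨s.take c, b, b', s.drop (c + 2 * h), hb, hb', ?_, ?_⟩
  · have hd : hdist b b' = mismatchCount (fun t => s.getD t false) c (c + h) h := by
      rw [hdist_eq_sum b b' (hb.trans hb'.symm), hb]
      refine sum_congr rfl fun t ht => ?_
      rw [getD_take_drop s (mem_range.mp ht) (by omega),
        getD_take_drop s (mem_range.mp ht) (by omega)]
    rw [hd]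
    exact hle
  · simp only [b, b', two_mul, ← add_assoc, ← List.drop_drop, List.append_assoc,
      List.take_append_drop]

lemma mul_lt_mismatchCount_of_forall_lt {f : ℕ → Bool} {β : ℝ} {a h N : ℕ} (hN : 0 < N)
    (hblock : ∀ r < N, β * h < mismatchCount f (a + r * h) (a + r * h + h) h) :
    N * (β * h) < mismatchCount f a (a + h) (N * h) := by
  induction N, hN using Nat.le_induction with
  | base => simpa using hblock 0 one_pos
  | succ N hN ih =>
    have hlast := hblock N (lt_add_one N)
    have hfirst := ih fun r hr => hblock r (hr.trans (lt_add_one N))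
    rw [add_right_comm] at hlast
    rw [Nat.succ_mul, mismatchCount_add]
    push_cast
    linarith

lemma sq_sub_one_le_div_mul {k ℓ : ℕ} (hℓ : 0 < ℓ) (hℓk : ℓ ≤ k) :
    (k - 1) ^ 2 ≤ k * (k - 1) / ℓ * ℓ := by
  have hdiv := Nat.div_add_mod (k * (k - 1)) ℓ
  have hmod := Nat.mod_lt (k * (k - 1)) hℓ
  obtain ⟨k, rfl⟩ : ∃ k', k = k' + 1 := ⟨k - 1, by omega⟩
  simp only [add_tsub_cancel_right] at hdiv hmod ⊢
  nlinarith

lemma sq_mul_lt_mismatchCount_of_betaRepeatFree {f : ℕ → Bool} {β : ℝ} (hβ : 0 < β)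
    {k m i j : ℕ} (hk : 2 ≤ k) (hij : i < j) (hjk : j ≤ k)
    (hfree : BetaRepeatFree β f ((j - i) * m) (k ^ 2 * m)) :
    β * (((k - 1) ^ 2 * m : ℕ) : ℝ) < mismatchCount f (i * m) (j * m) (k * (k - 1) * m) := by
  set ℓ := j - i
  set N := k * (k - 1) / ℓ
  have hNℓ : (k - 1) ^ 2 ≤ N * ℓ := sq_sub_one_le_div_mul (by omega) (by omega)
  have hNℓk : N * ℓ ≤ k * (k - 1) := Nat.div_mul_le_self _ _
  have hN : 0 < N := Nat.pos_of_ne_zero fun h0 => by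
    rw [h0, zero_mul] at hNℓ
    have : 1 ≤ k - 1 := by omega
    nlinarith
  have hj : j * m = i * m + ℓ * m := by rw [← add_mul]; congr 1; omega
  have hk2 : k * (k - 1) + k = k ^ 2 := by
    obtain ⟨k, rfl⟩ : ∃ k', k = k' + 1 := ⟨k - 1, by omega⟩
    simp only [add_tsub_cancel_right]; ring
  have hchain := mul_lt_mismatchCount_of_forall_lt (f := f) (β := β) (a := i * m) (h := ℓ * m) hN
    fun r hr => hfree _ <| by
      have hr' : (r + 2) * ℓ ≤ N * ℓ + ℓ := by nlinarith
      calc i * m + r * (ℓ * m) + 2 * (ℓ * m) = (i + (r + 2) * ℓ) * m := by ring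
        _ ≤ k ^ 2 * m := Nat.mul_le_mul_right m (by omega)
  have hβm : 0 ≤ β * m := mul_nonneg hβ.le m.cast_nonneg
  calc β * (((k - 1) ^ 2 * m : ℕ) : ℝ) = β * m * (((k - 1) ^ 2 : ℕ) : ℝ) := by push_cast; ring
    _ ≤ β * m * (N * ℓ) := by gcongr; exact_mod_cast hNℓ
    _ = N * (β * ((ℓ * m : ℕ) : ℝ)) := by push_cast; ring
    _ < mismatchCount f (i * m) (i * m + ℓ * m) (N * (ℓ * m)) := hchain
    _ ≤ _ := by
        rw [← hj]
        exact_mod_cast mismatchCount_mono f _ _ <| by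
          rw [← mul_assoc]; exact Nat.mul_le_mul_right m hNℓk

lemma sum_sum_ite_eq_eq_mul (f : ℕ → Bool) (K : ℕ) :
    ∑ j ∈ range K, ∑ i ∈ range j, (if f i = f j then 0 else 1) =
      (∑ i ∈ range K, if f i then 1 else 0) * ∑ i ∈ range K, if f i then 0 else 1 := by
  induction K with
  | zero => simp
  | succ K ih =>
    simp only [sum_range_succ, ih]
    cases f K <;> simp only [Bool.false_eq_true, ← Bool.not_eq_true, ite_not, if_true, if_false] <;>
      ring

lemma four_mul_sum_sum_ite_eq_le_sq (f : ℕ → Bool) (K : ℕ) :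
    4 * ∑ j ∈ range K, ∑ i ∈ range j, (if f i = f j then 0 else 1) ≤ K ^ 2 := by
  set ones := ∑ i ∈ range K, if f i then 1 else 0
  set zeros := ∑ i ∈ range K, if f i then 0 else 1
  have hK : ones + zeros = K := by
    rw [← sum_add_distrib]
    calc _ = ∑ _i ∈ range K, 1 := sum_congr rfl fun i _ => by cases f i <;> rfl
      _ = K := by simp
  calc 4 * ∑ j ∈ range K, ∑ i ∈ range j, (if f i = f j then 0 else 1)
      = 4 * ones * zeros := by rw [sum_sum_ite_eq_eq_mul, mul_assoc]
    _ ≤ (ones + zeros) ^ 2 := four_mul_le_sq_add _ _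
    _ = K ^ 2 := by rw [hK]

lemma four_mul_sum_sum_mismatchCount_le (f : ℕ → Bool) (d P K : ℕ) :
    4 * ∑ j ∈ range K, ∑ i ∈ range j, mismatchCount f (i * d) (j * d) P ≤ P * K ^ 2 := by
  have hswap : ∑ j ∈ range K, ∑ i ∈ range j, mismatchCount f (i * d) (j * d) P =
      ∑ t ∈ range P, ∑ j ∈ range K, ∑ i ∈ range j,
        (if f (i * d + t) = f (j * d + t) then 0 else 1) := by
    simp only [mismatchCount]
    rw [sum_comm]
    exact sum_congr rfl fun j _ => sum_comm
  calc 4 * ∑ j ∈ range K, ∑ i ∈ range j, mismatchCount f (i * d) (j * d) P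
      ≤ ∑ _t ∈ range P, K ^ 2 := by
        rw [hswap, mul_sum]
        exact sum_le_sum fun t _ => four_mul_sum_sum_ite_eq_le_sq (fun i => f (i * d + t)) K
    _ = P * K ^ 2 := by rw [sum_const, card_range, smul_eq_mul]

lemma mul_lt_two_mul_sum_sum {D : ℕ → ℕ → ℕ} {c : ℝ} {K : ℕ} (hK : 2 ≤ K)
    (hD : ∀ j < K, ∀ i < j, c < D i j) :
    c * (K * (K - 1) : ℕ) < 2 * ∑ j ∈ range K, ∑ i ∈ range j, (D i j : ℝ) := by
  calc c * (K * (K - 1) : ℕ) = 2 * ∑ j ∈ range K, ∑ _i ∈ range j, c := by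
        simp only [sum_const, card_range, nsmul_eq_mul, ← sum_mul, ← sum_range_id_mul_two]
        push_cast
        ring
    _ < 2 * ∑ j ∈ range K, ∑ i ∈ range j, (D i j : ℝ) := by
        gcongr 2 * ?_
        refine sum_lt_sum (fun j hj => sum_le_sum fun i hi =>
          (hD j (mem_range.mp hj) i (mem_range.mp hi)).le) ⟨1, mem_range.mpr (by omega), ?_⟩
        simpa using hD 1 (by omega) 0 one_pos

lemma add_one_le_two_mul_mul_sub_one {β : ℝ} (hβ : 1 / 2 < β) {k : ℝ}
    (hk : (2 * β + 1) / (2 * β - 1) ≤ k) : k + 1 ≤ 2 * β * (k - 1) := by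
  rw [div_le_iff₀ (by linarith)] at hk
  linarith

theorem beta_repeat_exists_general (β : ℝ) (hβ : 1 / 2 < β) (k : ℕ)
    (hk : (2 * β + 1) / (2 * β - 1) ≤ (k : ℝ)) (n : ℕ)
    (s : List Bool) (hs : s.length = n) :
    ∃ ℓ : ℕ, 1 ≤ ℓ ∧ ℓ ≤ k ∧ HasBetaRepeat β (ℓ * (n / k ^ 2)) s := by
  have hkβ := add_one_le_two_mul_mul_sub_one hβ hk
  have hk2 : 2 ≤ k := by
    by_contra! hk1
    have : (k : ℝ) ≤ 1 := by exact_mod_cast Nat.lt_succ_iff.mp hk1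
    nlinarith
  by_contra! hno
  set m := n / k ^ 2
  set f := fun t => s.getD t false
  have hkm : k ^ 2 * m ≤ s.length := hs ▸ mul_comm m _ ▸ Nat.div_mul_le_self n (k ^ 2)
  have hpair : ∀ j < k + 1, ∀ i < j, β * (((k - 1) ^ 2 * m : ℕ) : ℝ) <
      mismatchCount f (i * m) (j * m) (k * (k - 1) * m) := fun j hj i hij =>
    sq_mul_lt_mismatchCount_of_betaRepeatFree (by linarith) hk2 hij (by omega) fun c hc =>
      betaRepeatFree_of_not_hasBetaRepeat (hno _ (by omega) (by omega)) c (hc.trans hkm)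
  have hlower := mul_lt_two_mul_sum_sum (by omega) hpair
  have hupper := Nat.cast_le (α := ℝ) |>.mpr <|
    four_mul_sum_sum_mismatchCount_le f m (k * (k - 1) * m) (k + 1)
  push_cast [Nat.cast_sub (by omega : 1 ≤ k)] at hlower hupper
  have hm : (0 : ℝ) ≤ m := m.cast_nonneg
  have hk0 : (0 : ℝ) ≤ k * ((k : ℝ) - 1) * m * (k + 1) := by
    have : (1 : ℝ) ≤ k := by exact_mod_cast (by omega : 1 ≤ k)
    positivity
  nlinarith [mul_le_mul_of_nonneg_left hkβ hk0]

theorem beta_repeat_exists (β : ℝ) (hβ : 1 / 2 < β) (k : ℕ)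
    (hk : (2 * β + 1) / (2 * β - 1) ≤ (k : ℝ)) (n : ℕ) (hn : k ^ 2 ≤ n)
    (s : List Bool) (hs : s.length = n) :
    ∃ ℓ : ℕ, 1 ≤ ℓ ∧ ℓ ≤ k ∧ HasBetaRepeat β (ℓ * (n / k ^ 2)) s :=
  beta_repeat_exists_general β hβ k hk n s hs
end
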